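/- arXiv:2108.04569 — 4 statements merged into one kernel-verified Lean document; each statement's English description precedes it below -/
import Mathlib

section
/- Let R be an algebraic curvature tensor on (ℝ⁴,g,S) satisfying R(Sx,Sy,Sz,Su)=R(x,y,z,u), with g the skew-circulant metric with first row (A,B,0,−B), A²−2B²≠0. Then the Ricci tensor ρ(y,z) = Σ g^{ij} R(e_i,y,z,e_j) satisfies ρ₁₁ = ρ₂₂ = ρ₃₃ = ρ₄₄, ρ₁₂ = ρ₂₃ = ρ₃₄ = −ρ₁₄, and ρ₁₃ = ρ₂₄ = 0. -/
/-!
S-invariance of the metric passes to its inverse, and contracting an S-invariant curvature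
tensor against an S-invariant `g⁻¹` yields an S-invariant Ricci tensor, `Sᵀ ρ S = ρ`. Since `S`
is a signed cyclic shift of the basis, `e₀ ↦ -e₃, e₁ ↦ e₀, e₂ ↦ e₁, e₃ ↦ e₂`, this invariance
says `ρ(e_{σj}, e_{σk}) = ±ρ(e_j, e_k)` for the 4-cycle `σ`, which together with the symmetry of
`ρ` gives all the stated relations; in particular `ρ₁₃ = -ρ₃₁ = -ρ₁₃`.
-/

open Matrix

section RicciContraction

variable {n K : Type*} [Fintype n] [CommRing K]

def curvatureSlice (R : n → n → n → n → K) (j k : n) : Matrix n n K :=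
  of fun i l => R i j k l

def ricciContraction (H : Matrix n n K) (R : n → n → n → n → K) : Matrix n n K :=
  of fun j k => ∑ i, ∑ l, H i l * R i j k l

theorem ricciContraction_apply_eq_trace (H : Matrix n n K) (R : n → n → n → n → K) (j k : n) :
    ricciContraction H R j k = trace (Hᵀ * curvatureSlice R j k) := by
  simp only [ricciContraction, curvatureSlice, trace, diag, mul_apply, transpose_apply, of_apply]
  exact Finset.sum_comm

theorem isSymm_ricciContraction {H : Matrix n n K} (hH : H.IsSymm)
    {R : n → n → n → n → K} (hanti : ∀ i j k h, R i j k h = -R j i k h)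
    (hpair : ∀ i j k h, R i j k h = R k h i j) :
    (ricciContraction H R).IsSymm := by
  ext j k
  have hswap : ∀ i l, R i k j l = R l j k i := fun i l => by
    rw [hanti i k j l, hpair k i j l, hanti j l k i, neg_neg]
  have hHsymm : ∀ i l, H i l = H l i := fun i l => congr_fun₂ hH l i
  show (ricciContraction H R)ᵀ j k = _
  calc (ricciContraction H R)ᵀ j k = ∑ i, ∑ l, H l i * R l j k i := by
        simp only [transpose_apply, ricciContraction, of_apply, hswap, hHsymm]
    _ = ricciContraction H R j k := Finset.sum_comm

variable {S : Matrix n n K} {R : n → n → n → n → K}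

theorem transpose_mul_sum_smul_curvatureSlice_mul
    (hR : ∀ i j k h, ∑ a, ∑ b, ∑ c, ∑ d, R a b c d * S a i * S b j * S c k * S d h = R i j k h)
    (j k : n) :
    Sᵀ * (∑ b, ∑ c, (S b j * S c k) • curvatureSlice R b c) * S = curvatureSlice R j k := by
  ext i l
  rw [curvatureSlice, of_apply, ← hR]
  calc _ = ∑ a, ∑ d, S a i * (∑ b, ∑ c, (S b j * S c k) • curvatureSlice R b c) a d * S d l := by
        simp only [mul_apply, transpose_apply, Finset.sum_mul]
        exact Finset.sum_comm
    _ = _ := by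
        refine Finset.sum_congr rfl fun a _ => ?_
        simp only [curvatureSlice, Matrix.sum_apply, Matrix.smul_apply, of_apply, smul_eq_mul,
          Finset.mul_sum, Finset.sum_mul]
        rw [Finset.sum_comm]
        refine Finset.sum_congr rfl fun b _ => ?_
        rw [Finset.sum_comm]
        exact Finset.sum_congr rfl fun c _ => Finset.sum_congr rfl fun d _ => by ring

-- With `ρ_jk = tr(Hᵀ M_jk)`, cycling the trace moves the two `S` of the metric onto the slice.
theorem transpose_mul_ricciContraction_mul
    (hR : ∀ i j k h, ∑ a, ∑ b, ∑ c, ∑ d, R a b c d * S a i * S b j * S c k * S d h = R i j k h)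
    (H : Matrix n n K) :
    Sᵀ * ricciContraction (S * H * Sᵀ) R * S = ricciContraction H R := by
  ext j k
  set N := ∑ b, ∑ c, (S b j * S c k) • curvatureSlice R b c
  calc (Sᵀ * ricciContraction (S * H * Sᵀ) R * S) j k
      = ∑ b, ∑ c, S b j * S c k * ricciContraction (S * H * Sᵀ) R b c := by
        simp only [mul_apply, transpose_apply, Finset.sum_mul]
        rw [Finset.sum_comm]
        exact Finset.sum_congr rfl fun b _ => Finset.sum_congr rfl fun c _ => by ring
    _ = trace ((S * H * Sᵀ)ᵀ * N) := by
        simp only [N, Matrix.mul_sum, Matrix.mul_smul, trace_sum, trace_smul, smul_eq_mul,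
          ricciContraction_apply_eq_trace]
    _ = trace (Hᵀ * (Sᵀ * N * S)) := by
        rw [transpose_mul, transpose_mul, transpose_transpose, trace_mul_cycle, trace_mul_cycle]
        simp only [Matrix.mul_assoc]
    _ = ricciContraction H R j k := by
        rw [transpose_mul_sum_smul_curvatureSlice_mul hR, ricciContraction_apply_eq_trace]

theorem mul_inv_mul_transpose_eq_inv [DecidableEq n] {G : Matrix n n K} (hS : IsUnit S.det)
    (hG : Sᵀ * G * S = G) : S * G⁻¹ * Sᵀ = G⁻¹ := by
  calc S * G⁻¹ * Sᵀ = S * (Sᵀ * G * S)⁻¹ * Sᵀ := by rw [hG]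
    _ = G⁻¹ := by
      rw [Matrix.mul_inv_rev, Matrix.mul_inv_rev, mul_nonsing_inv_cancel_left S _ hS,
        nonsing_inv_mul_cancel_right Sᵀ _ (isUnit_det_transpose _ hS)]

end RicciContraction

section SkewCirculant

abbrev skewShift (K : Type*) [CommRing K] : Matrix (Fin 4) (Fin 4) K :=
  !![0, 1, 0, 0; 0, 0, 1, 0; 0, 0, 0, 1; -1, 0, 0, 0]

abbrev skewCirculant {K : Type*} [CommRing K] (A B : K) : Matrix (Fin 4) (Fin 4) K :=
  !![A, B, 0, -B; B, A, B, 0; 0, B, A, B; -B, 0, B, A]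

variable {K : Type*} [CommRing K]

theorem skewShift_mul_transpose : skewShift K * (skewShift K)ᵀ = 1 := by
  ext i j
  fin_cases i <;> fin_cases j <;> simp [mul_apply, Fin.sum_univ_four]

theorem isSymm_skewCirculant (A B : K) : (skewCirculant A B).IsSymm := by
  ext i j
  fin_cases i <;> fin_cases j <;> simp

theorem transpose_skewShift_mul_skewCirculant_mul (A B : K) :
    (skewShift K)ᵀ * skewCirculant A B * skewShift K = skewCirculant A B := by
  ext i j
  fin_cases i <;> fin_cases j <;> simp [mul_apply, Fin.sum_univ_four]

theorem entries_of_isSymm_of_skewShift_invariant [NoZeroDivisors K] [CharZero K]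
    {ρ : Matrix (Fin 4) (Fin 4) K}
    (hsymm : ρ.IsSymm) (hinv : (skewShift K)ᵀ * ρ * skewShift K = ρ) :
    (ρ 0 0 = ρ 1 1 ∧ ρ 1 1 = ρ 2 2 ∧ ρ 2 2 = ρ 3 3) ∧
    (ρ 0 1 = ρ 1 2 ∧ ρ 1 2 = ρ 2 3 ∧ ρ 2 3 = -ρ 0 3) ∧
    (ρ 0 2 = 0 ∧ ρ 1 3 = 0) := by
  have e : ∀ j k, ((skewShift K)ᵀ * ρ * skewShift K) j k = ρ j k := fun j k => congr_fun₂ hinv j k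
  have s : ∀ j k, ρ k j = ρ j k := fun j k => congr_fun₂ hsymm j k
  have e11 := e 1 1
  have e22 := e 2 2
  have e33 := e 3 3
  have e01 := e 0 1
  have e12 := e 1 2
  have e23 := e 2 3
  have e02 := e 0 2
  have e13 := e 1 3
  simp only [Fin.isValue, mul_apply, transpose_apply, of_apply, cons_val', cons_val_one,
    cons_val_zero, cons_val_fin_one, Fin.sum_univ_four, one_mul, zero_mul, add_zero, cons_val,
    mul_one, mul_zero, zero_add, neg_mul, Finset.sum_neg_distrib]
    at e11 e22 e33 e01 e12 e23 e02 e13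
  rw [s 1 3] at e02
  rw [s 0 3] at e01
  have h13 : ρ 1 3 = 0 := CharZero.eq_neg_self_iff.mp (e13.symm.trans e02.symm)
  refine ⟨⟨e11, e22, e33⟩, ⟨e12, e23, ?_⟩, e13.trans h13, h13⟩
  rw [← e23, ← e12, ← e01]

end SkewCirculant

theorem ricci_components_of_S_invariant_curvature_general
    (A B : ℝ)
    (S G : Matrix (Fin 4) (Fin 4) ℝ)
    (hS : S = !![0, 1, 0, 0; 0, 0, 1, 0; 0, 0, 0, 1; -1, 0, 0, 0])
    (hG : G = !![A, B, 0, -B; B, A, B, 0; 0, B, A, B; -B, 0, B, A])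
    (R : Fin 4 → Fin 4 → Fin 4 → Fin 4 → ℝ)
    (hanti1 : ∀ i j k h, R i j k h = -R j i k h)
    (hpair : ∀ i j k h, R i j k h = R k h i j)
    (hinv : ∀ i j k h, (∑ a, ∑ b, ∑ c, ∑ d,
        R a b c d * S a i * S b j * S c k * S d h) = R i j k h)
    (ρ : Fin 4 → Fin 4 → ℝ)
    (hρ : ∀ j k, ρ j k = ∑ i, ∑ l, G⁻¹ i l * R i j k l) :
    (ρ 0 0 = ρ 1 1 ∧ ρ 1 1 = ρ 2 2 ∧ ρ 2 2 = ρ 3 3) ∧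
    (ρ 0 1 = ρ 1 2 ∧ ρ 1 2 = ρ 2 3 ∧ ρ 2 3 = -ρ 0 3) ∧
    (ρ 0 2 = 0 ∧ ρ 1 3 = 0) := by
  have hSS : S * Sᵀ = 1 := by rw [hS]; exact skewShift_mul_transpose
  have hGsymm : G.IsSymm := by rw [hG]; exact isSymm_skewCirculant A B
  have hSG : Sᵀ * G * S = G := by rw [hS, hG]; exact transpose_skewShift_mul_skewCirculant_mul A B
  have hGinv : S * G⁻¹ * Sᵀ = G⁻¹ :=
    mul_inv_mul_transpose_eq_inv (isUnit_det_of_right_inverse hSS) hSG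
  obtain rfl : ρ = ricciContraction G⁻¹ R := funext₂ hρ
  refine entries_of_isSymm_of_skewShift_invariant
    (isSymm_ricciContraction hGsymm.inv hanti1 hpair) ?_
  subst hS
  simpa only [hGinv] using transpose_mul_ricciContraction_mul hinv G⁻¹

theorem ricci_components_of_S_invariant_curvature
    (A B : ℝ) (hAB : A ^ 2 - 2 * B ^ 2 ≠ 0)
    (S G : Matrix (Fin 4) (Fin 4) ℝ)
    (hS : S = !![0, 1, 0, 0; 0, 0, 1, 0; 0, 0, 0, 1; -1, 0, 0, 0])
    (hG : G = !![A, B, 0, -B; B, A, B, 0; 0, B, A, B; -B, 0, B, A])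
    (R : Fin 4 → Fin 4 → Fin 4 → Fin 4 → ℝ)
    (hanti1 : ∀ i j k h, R i j k h = -R j i k h)
    (hanti2 : ∀ i j k h, R i j k h = -R i j h k)
    (hpair : ∀ i j k h, R i j k h = R k h i j)
    (hbianchi : ∀ i j k h, R i j k h + R j k i h + R k i j h = 0)
    (hinv : ∀ i j k h, (∑ a, ∑ b, ∑ c, ∑ d,
        R a b c d * S a i * S b j * S c k * S d h) = R i j k h)
    (ρ : Fin 4 → Fin 4 → ℝ)
    (hρ : ∀ j k, ρ j k = ∑ i, ∑ l, G⁻¹ i l * R i j k l) :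
    (ρ 0 0 = ρ 1 1 ∧ ρ 1 1 = ρ 2 2 ∧ ρ 2 2 = ρ 3 3) ∧
    (ρ 0 1 = ρ 1 2 ∧ ρ 1 2 = ρ 2 3 ∧ ρ 2 3 = -ρ 0 3) ∧
    (ρ 0 2 = 0 ∧ ρ 1 3 = 0) :=
  ricci_components_of_S_invariant_curvature_general A B S G hS hG R hanti1 hpair hinv ρ hρ
end

section
/- In the above setting, if moreover ρ(x,y) = α·g(x,y) for a constant α (Einstein condition), then τ* = 0, where τ* = g̃^{ij}ρ_{ij}. -/
theorem einstein_implies_tau_star_zero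
    (A B : ℝ) (hAB : A ^ 2 - 2 * B ^ 2 ≠ 0)
    (hA : A > Real.sqrt 2 * B) (hB : Real.sqrt 2 * B > 0)
    (S G Gt : Matrix (Fin 4) (Fin 4) ℝ)
    (hS : S = !![0, 1, 0, 0; 0, 0, 1, 0; 0, 0, 0, 1; -1, 0, 0, 0])
    (hG : G = !![A, B, 0, -B; B, A, B, 0; 0, B, A, B; -B, 0, B, A])
    (hGt : Gt = !![2*B, A, 0, -A; A, 2*B, A, 0; 0, A, 2*B, A; -A, 0, A, 2*B])
    (R : Fin 4 → Fin 4 → Fin 4 → Fin 4 → ℝ)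
    (hanti1 : ∀ i j k h, R i j k h = -R j i k h)
    (hanti2 : ∀ i j k h, R i j k h = -R i j h k)
    (hpair : ∀ i j k h, R i j k h = R k h i j)
    (hbianchi : ∀ i j k h, R i j k h + R j k i h + R k i j h = 0)
    (hinv : ∀ i j k h, (∑ a, ∑ b, ∑ c, ∑ d,
        R a b c d * S a i * S b j * S c k * S d h) = R i j k h)
    (ρ : Fin 4 → Fin 4 → ℝ)
    (hρ : ∀ j k, ρ j k = ∑ i, ∑ l, G⁻¹ i l * R i j k l)
    (α : ℝ) (hEinstein : ∀ i j, ρ i j = α * G i j)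
    (τstar : ℝ)
    (hτstar : τstar = ∑ i, ∑ j, Gt⁻¹ i j * ρ i j) :
    τstar = 0 := by
  have hd : (4 * B ^ 2 - 2 * A ^ 2 : ℝ) ≠ 0 := by
    intro h; apply hAB; linarith
  set d : ℝ := 4 * B ^ 2 - 2 * A ^ 2 with hdq
  have hGti : Gt⁻¹ = !![2*B/d, -A/d, 0, A/d;
                        -A/d, 2*B/d, -A/d, 0;
                        0, -A/d, 2*B/d, -A/d;
                        A/d, 0, -A/d, 2*B/d] := by
    apply Matrix.inv_eq_right_inv
    subst hGt
    ext i j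
    fin_cases i <;> fin_cases j <;>
      simp [Matrix.mul_apply, Fin.sum_univ_four] <;> field_simp <;> ring
  rw [hτstar]
  simp only [hEinstein, hGti, hG, Fin.sum_univ_four]
  simp [Matrix.cons_val_zero, Matrix.cons_val_one]
  ring
end

section
/- The curvature tensor of the Lie group example (g₄,₅ with a=b=1), with components R₁₂₁₂=R₁₃₁₃=R₁₄₁₄=R₂₃₂₃=R₂₄₂₄=R₃₄₃₄=1 and all others (not obtained from these by symmetries) zero, satisfies R(Sx,Sy,Sz,Su)=R(x,y,z,u) for the skew-circulant structure S (Se₁=−e₄, Se₂=e₁, Se₃=e₂, Se₄=e₃), but does NOT satisfy R(x,y,Sz,Su)=R(x,y,z,u). -/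
/-- The curvature tensor of the Lie group example (𝔤₄,₅ with a = b = 1):
R_{ijkh} = δ_{ik}δ_{jh} − δ_{ih}δ_{jk}, i.e. the nonzero components up to
symmetries are R₁₂₁₂ = R₁₃₁₃ = R₁₄₁₄ = R₂₃₂₃ = R₂₄₂₄ = R₃₄₃₄ = 1. -/
def Rex (i j k h : Fin 4) : ℝ :=
  (if i = k then (1:ℝ) else 0) * (if j = h then 1 else 0) -
  (if i = h then (1:ℝ) else 0) * (if j = k then 1 else 0)

/-!
`Rex` is the constant-curvature tensor `R_G(x,y,z,u) = G(x,z)G(y,u) − G(x,u)G(y,z)` of the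
Euclidean form `G = 1`. Pulling `R_G` back along `S` in all four slots gives `R_{SᵀGS}`, and in the
last two slots only gives `R_{GS}`. The skew-circulant `S` is orthogonal, so the first pullback is
`R_1 = Rex`; but `R_S` is not `R_1`, e.g. `R_S(e₁,e₂,e₁,e₂) = S₁₁S₂₂ − S₁₂S₂₁ = 0`.
-/

open Finset

namespace Matrix

variable {n R : Type*} [CommRing R]

def constCurvatureTensor (G : Matrix n n R) (i j k h : n) : R :=
  G i k * G j h - G i h * G j k

theorem constCurvatureTensor_transpose (G : Matrix n n R) (i j k h : n) :
    constCurvatureTensor Gᵀ k h i j = constCurvatureTensor G i j k h := by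
  simp only [constCurvatureTensor, transpose_apply]
  ring

variable [Fintype n]

theorem sum_constCurvatureTensor_mul_mul (G S : Matrix n n R) (i j k h : n) :
    ∑ c, ∑ d, constCurvatureTensor G i j c d * S c k * S d h =
      constCurvatureTensor (G * S) i j k h := by
  simp only [constCurvatureTensor, mul_apply, sub_mul, sum_sub_distrib, sum_mul_sum]
  congr 1
  · exact sum_congr rfl fun _ _ => sum_congr rfl fun _ _ => by ring
  · rw [sum_comm]
    exact sum_congr rfl fun _ _ => sum_congr rfl fun _ _ => by ring

theorem sum_constCurvatureTensor_pullback (G S : Matrix n n R) (i j k h : n) :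
    ∑ a, ∑ b, ∑ c, ∑ d, constCurvatureTensor G a b c d * S a i * S b j * S c k * S d h =
      constCurvatureTensor (Sᵀ * G * S) i j k h := by
  calc ∑ a, ∑ b, ∑ c, ∑ d, constCurvatureTensor G a b c d * S a i * S b j * S c k * S d h
      = ∑ a, ∑ b, constCurvatureTensor (G * S)ᵀ k h a b * S a i * S b j := by
        refine sum_congr rfl fun a _ => sum_congr rfl fun b _ => ?_
        rw [constCurvatureTensor_transpose, ← sum_constCurvatureTensor_mul_mul, sum_mul, sum_mul]
        refine sum_congr rfl fun c _ => ?_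
        rw [sum_mul, sum_mul]
        exact sum_congr rfl fun d _ => by ring
    _ = constCurvatureTensor (Sᵀ * G * S) i j k h := by
        rw [sum_constCurvatureTensor_mul_mul, ← constCurvatureTensor_transpose, transpose_mul,
          transpose_transpose, Matrix.mul_assoc]

theorem sum_constCurvatureTensor_pullback_of_transpose_mul_self [DecidableEq n]
    {S : Matrix n n R} (hS : Sᵀ * S = 1) (i j k h : n) :
    ∑ a, ∑ b, ∑ c, ∑ d, constCurvatureTensor 1 a b c d * S a i * S b j * S c k * S d h =
      constCurvatureTensor 1 i j k h := by
  rw [sum_constCurvatureTensor_pullback, Matrix.mul_one, hS]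

end Matrix

open Matrix

theorem Rex_eq_constCurvatureTensor_one :
    Rex = constCurvatureTensor (1 : Matrix (Fin 4) (Fin 4) ℝ) := by
  funext i j k h
  simp only [Rex, constCurvatureTensor, one_apply]

theorem skewCirculant_transpose_mul_self :
    (!![0, 1, 0, 0; 0, 0, 1, 0; 0, 0, 0, 1; -1, 0, 0, 0] : Matrix (Fin 4) (Fin 4) ℝ)ᵀ *
      !![0, 1, 0, 0; 0, 0, 1, 0; 0, 0, 0, 1; -1, 0, 0, 0] = 1 := by
  ext i j
  fin_cases i <;> fin_cases j <;> simp [mul_apply, Fin.sum_univ_four]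

theorem example_satisfies_R_but_not_R1
    (S : Matrix (Fin 4) (Fin 4) ℝ)
    (hS : S = !![0, 1, 0, 0; 0, 0, 1, 0; 0, 0, 0, 1; -1, 0, 0, 0]) :
    (∀ i j k h, (∑ a, ∑ b, ∑ c, ∑ d,
        Rex a b c d * S a i * S b j * S c k * S d h) = Rex i j k h) ∧
    ¬ (∀ i j k h, (∑ c, ∑ d, Rex i j c d * S c k * S d h) = Rex i j k h) := by
  rw [Rex_eq_constCurvatureTensor_one]
  refine ⟨sum_constCurvatureTensor_pullback_of_transpose_mul_self
    (hS ▸ skewCirculant_transpose_mul_self), fun h => ?_⟩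
  have h₀₁₀₁ := h 0 1 0 1
  rw [sum_constCurvatureTensor_mul_mul, Matrix.one_mul, hS] at h₀₁₀₁
  simp [constCurvatureTensor] at h₀₁₀₁
end

section
/- Let R be an algebraic curvature tensor on ℝ⁴ satisfying the stronger identity R(a,b,Sc,Sd)=R(a,b,c,d), where S is a g-isometry with S⁴=−id and {S³x,S²x,Sx,x} is an orthonormal basis. Then for any unit vector u with φ = ∠(u,Su) and unit vector v with ∠(v,Sv) = π/3, the sectional curvatures satisfy k(u,Su) = (1+2cos²φ−3cosφ)/(1−cos²φ)·k(x,Sx) + (3cosφ)/(2(1−cos²φ))·k(v,Sv). In particular also k(x,S²x) = 2(1−cos²ψ)·k(x,Sx) for ψ=∠(x,Sx). -/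
/-!
An alternating bilinear form ω with ω(S·, S·) = ω is determined by ω(x, Sx) and ω(x, S²x), since
x, Sx, S²x, S³x is a basis; so it is a combination of the invariant forms g(S²·, ·) and
g((S + S³)·, ·). Applying this to both pairs of arguments of R, together with the Bianchi
identity R(x, S²x, x, S²x) = 2 R(x, Sx, x, Sx), gives
  R(w, Sw, w, Sw) = A (|w|⁴ + 2 g(w, Sw)²) + 2 B g(w, Sw) |w|²
with A = R(x, Sx, x, Sx) = k(x, Sx) and B = R(x, Sx, x, S²x). Evaluating at v expresses B
through k(v, Sv) and A, and evaluating at u then gives the formula.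
-/

open Module

section

variable {V : Type*} [AddCommGroup V] [Module ℝ V] {g : V →ₗ[ℝ] V →ₗ[ℝ] ℝ} {S : V →ₗ[ℝ] V}

lemma pow_add_four_apply (hS4 : ∀ v, S (S (S (S v))) = -v) (n : ℕ) (v : V) :
    (S ^ (n + 4)) v = -(S ^ n) v := by
  simp [pow_succ, Module.End.mul_apply, hS4]

lemma apply_pow_apply_pow {ω : V →ₗ[ℝ] V →ₗ[ℝ] ℝ} (hinv : ∀ a b, ω (S a) (S b) = ω a b)
    (n : ℕ) (a b : V) : ω ((S ^ n) a) ((S ^ n) b) = ω a b := by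
  induction n with
  | zero => simp
  | succ n ih => rw [pow_succ', Module.End.mul_apply, Module.End.mul_apply, hinv, ih]

lemma apply_sq_self_eq_zero (hsymm : ∀ a b, g a b = g b a)
    (hiso : ∀ a b, g (S a) (S b) = g a b) (hS4 : ∀ v, S (S (S (S v))) = -v) (a : V) :
    g (S (S a)) a = 0 := by
  have h := (hiso (S (S (S a))) (S a)).trans (hiso (S (S a)) a)
  rw [hS4, map_neg, LinearMap.neg_apply, hsymm a] at h
  linarith

lemma apply_pow_apply_pow_eq_ite (hsymm : ∀ a b, g a b = g b a)
    (hiso : ∀ a b, g (S a) (S b) = g a b) (hS4 : ∀ v, S (S (S (S v))) = -v) {x : V}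
    (hx : g x x = 1) (hx1 : g x (S x) = 0) {i j : ℕ} (hi : i < 4) (hj : j < 4) :
    g ((S ^ i) x) ((S ^ j) x) = if i = j then 1 else 0 := by
  wlog hij : i ≤ j generalizing i j
  · rw [hsymm, this hj hi (by omega)]
    simp only [eq_comm]
  obtain ⟨n, rfl⟩ := Nat.exists_eq_add_of_le hij
  rw [pow_add, Module.End.mul_apply, apply_pow_apply_pow hiso]
  have hn : n < 4 := by omega
  interval_cases n
  · simpa using hx
  · simpa using hx1
  · simpa [pow_succ, hsymm x] using apply_sq_self_eq_zero hsymm hiso hS4 x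
  · have h3 := hiso x (S (S (S x)))
    rw [hS4, map_neg, hsymm (S x), hx1, neg_zero] at h3
    simpa [pow_succ] using h3.symm

lemma linearIndependent_pow_apply (hsymm : ∀ a b, g a b = g b a)
    (hiso : ∀ a b, g (S a) (S b) = g a b) (hS4 : ∀ v, S (S (S (S v))) = -v) {x : V}
    (hx : g x x = 1) (hx1 : g x (S x) = 0) :
    LinearIndependent ℝ fun i : Fin 4 => (S ^ (i : ℕ)) x := by
  rw [Fintype.linearIndependent_iff]
  intro l hl j
  have h := congrArg (fun z => g z ((S ^ (j : ℕ)) x)) hl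
  simpa [map_sum, apply_pow_apply_pow_eq_ite hsymm hiso hS4 hx hx1, Fin.val_inj] using h

lemma apply_pow_apply_pow_eq_zero (hS4 : ∀ v, S (S (S (S v))) = -v)
    {ω : V →ₗ[ℝ] V →ₗ[ℝ] ℝ} (hω : ω.IsAlt) (hinv : ∀ a b, ω (S a) (S b) = ω a b) {x : V}
    (h1 : ω x (S x) = 0) (h2 : ω x (S (S x)) = 0) (i j : ℕ) :
    ω ((S ^ i) x) ((S ^ j) x) = 0 := by
  have h : ∀ n, ω x ((S ^ n) x) = 0 := by
    intro n
    induction n using Nat.strong_induction_on with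
    | _ n ih =>
      match n, ih with
      | 0, _ => simpa using hω x
      | 1, _ => simpa using h1
      | 2, _ => simpa [pow_succ] using h2
      | 3, _ =>
        have h3 := hinv x (S (S (S x)))
        rw [hS4, map_neg, ← hω.neg, neg_neg] at h3
        simpa [pow_succ, h1] using h3.symm
      | n + 4, ih => rw [pow_add_four_apply hS4, map_neg, ih n (by omega), neg_zero]
  wlog hij : i ≤ j generalizing i j
  · rw [← hω.neg, this j i (by omega), neg_zero]
  obtain ⟨n, rfl⟩ := Nat.exists_eq_add_of_le hij
  rw [pow_add, Module.End.mul_apply, apply_pow_apply_pow hinv, h]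

lemma eq_zero_of_isAlt_of_apply_eq_zero [FiniteDimensional ℝ V] (hV : finrank ℝ V = 4)
    (hsymm : ∀ a b, g a b = g b a) (hiso : ∀ a b, g (S a) (S b) = g a b)
    (hS4 : ∀ v, S (S (S (S v))) = -v) {x : V} (hx : g x x = 1) (hx1 : g x (S x) = 0)
    {ω : V →ₗ[ℝ] V →ₗ[ℝ] ℝ} (hω : ω.IsAlt) (hinv : ∀ a b, ω (S a) (S b) = ω a b)
    (h1 : ω x (S x) = 0) (h2 : ω x (S (S x)) = 0) : ω = 0 := by
  let B := basisOfLinearIndependentOfCardEqFinrank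
    (linearIndependent_pow_apply hsymm hiso hS4 hx hx1) (by simp [hV])
  refine LinearMap.ext_basis B B fun i j => ?_
  simp [B, coe_basisOfLinearIndependentOfCardEqFinrank,
    apply_pow_apply_pow_eq_zero hS4 hω hinv h1 h2]

variable (g S) in
def sqForm : V →ₗ[ℝ] V →ₗ[ℝ] ℝ := g.comp (S ^ 2)

-- `S + S³ = S - Sᵀ`, since `Sᵀ = S⁻¹ = -S³`.
variable (g S) in
def skewForm : V →ₗ[ℝ] V →ₗ[ℝ] ℝ := g.comp (S + S ^ 3)

@[simp]
lemma sqForm_apply (a b : V) : sqForm g S a b = g (S (S a)) b := by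
  simp [sqForm, pow_two]

@[simp]
lemma skewForm_apply (a b : V) : skewForm g S a b = g (S a) b + g (S (S (S a))) b := by
  simp [skewForm, pow_succ]

lemma sqForm_isAlt (hsymm : ∀ a b, g a b = g b a) (hiso : ∀ a b, g (S a) (S b) = g a b)
    (hS4 : ∀ v, S (S (S (S v))) = -v) : (sqForm g S).IsAlt :=
  fun a => by simpa using apply_sq_self_eq_zero hsymm hiso hS4 a

lemma skewForm_isAlt (hsymm : ∀ a b, g a b = g b a) (hiso : ∀ a b, g (S a) (S b) = g a b)
    (hS4 : ∀ v, S (S (S (S v))) = -v) : (skewForm g S).IsAlt := by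
  intro a
  have h := hiso (S (S (S a))) a
  rw [hS4, map_neg, LinearMap.neg_apply, hsymm a] at h
  simp only [skewForm_apply]
  linarith

lemma eq_smul_sqForm_add_smul_skewForm [FiniteDimensional ℝ V] (hV : finrank ℝ V = 4)
    (hsymm : ∀ a b, g a b = g b a) (hiso : ∀ a b, g (S a) (S b) = g a b)
    (hS4 : ∀ v, S (S (S (S v))) = -v) {x : V} (hx : g x x = 1) (hx1 : g x (S x) = 0)
    {ω : V →ₗ[ℝ] V →ₗ[ℝ] ℝ} (hω : ω.IsAlt) (hinv : ∀ a b, ω (S a) (S b) = ω a b) :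
    ω = ω x (S (S x)) • sqForm g S + ω x (S x) • skewForm g S := by
  have hx1' : g (S x) x = 0 := by rw [hsymm, hx1]
  have hx2 : g (S (S x)) x = 0 := apply_sq_self_eq_zero hsymm hiso hS4 x
  refine sub_eq_zero.mp
    (eq_zero_of_isAlt_of_apply_eq_zero hV hsymm hiso hS4 hx hx1 ?_ ?_ ?_ ?_)
  · intro a
    simp [hω.self_eq_zero, (sqForm_isAlt hsymm hiso hS4).self_eq_zero,
      (skewForm_isAlt hsymm hiso hS4).self_eq_zero]
  · intro a b
    simp [hinv, hiso]
  · simp [hiso, hx, hx1', hx2]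
  · simp [hiso, hx, hx1, hx1']

structure IsAlgCurvatureTensor (R : V →ₗ[ℝ] V →ₗ[ℝ] V →ₗ[ℝ] V →ₗ[ℝ] ℝ) : Prop where
  antisymm_left : ∀ a b c d, R a b c d = -R b a c d
  antisymm_right : ∀ a b c d, R a b c d = -R a b d c
  pair_symm : ∀ a b c d, R a b c d = R c d a b
  bianchi : ∀ a b c d, R a b c d + R b c a d + R c a b d = 0

namespace IsAlgCurvatureTensor

variable {R : V →ₗ[ℝ] V →ₗ[ℝ] V →ₗ[ℝ] V →ₗ[ℝ] ℝ}

lemma isAlt (hR : IsAlgCurvatureTensor R) (a b : V) : (R a b).IsAlt := fun c => by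
  linarith [hR.antisymm_right a b c c]

lemma apply_sq_apply_sq_eq_two_mul (hR : IsAlgCurvatureTensor R)
    (hinv : ∀ a b c d, R a b (S c) (S d) = R a b c d) (hS4 : ∀ v, S (S (S (S v))) = -v)
    (x : V) : R x (S (S x)) x (S (S x)) = 2 * R x (S x) x (S x) := by
  have h3 : R x (S x) x (S (S (S x))) = R x (S x) x (S x) := by
    have h := hinv x (S x) (S (S (S x))) x
    rw [hS4, map_neg, LinearMap.neg_apply] at h
    linarith [hR.antisymm_right x (S x) x (S (S (S x)))]
  have t1 : R x (S (S x)) (S x) (S (S (S x))) = R x (S (S x)) x (S (S x)) :=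
    hinv x (S (S x)) x (S (S x))
  have t2 : R (S (S x)) (S x) x (S (S (S x))) = -R x (S x) x (S x) := by
    rw [hR.antisymm_left, hR.pair_symm (S x), hinv x (S (S (S x))) x (S x),
      hR.pair_symm x (S (S (S x))), h3]
  have t3 : R (S x) x (S (S x)) (S (S (S x))) = -R x (S x) x (S x) := by
    rw [hR.antisymm_left, hinv x (S x) (S x) (S (S x)), hinv x (S x) x (S x)]
  linarith [hR.bianchi x (S (S x)) (S x) (S (S (S x)))]

lemma apply_eq_sqForm_skewForm [FiniteDimensional ℝ V] (hV : finrank ℝ V = 4)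
    (hsymm : ∀ a b, g a b = g b a) (hiso : ∀ a b, g (S a) (S b) = g a b)
    (hS4 : ∀ v, S (S (S (S v))) = -v) {x : V} (hx : g x x = 1) (hx1 : g x (S x) = 0)
    (hR : IsAlgCurvatureTensor R) (hinv : ∀ a b c d, R a b (S c) (S d) = R a b c d) (a b : V) :
    R a b a b = R x (S (S x)) x (S (S x)) * sqForm g S a b ^ 2
      + 2 * R x (S x) x (S (S x)) * sqForm g S a b * skewForm g S a b
      + R x (S x) x (S x) * skewForm g S a b ^ 2 := by
  have hrep : ∀ c d a b, R c d a b =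
      R c d x (S (S x)) * sqForm g S a b + R c d x (S x) * skewForm g S a b := fun c d a b => by
    simpa using LinearMap.congr_fun₂
      (eq_smul_sqForm_add_smul_skewForm hV hsymm hiso hS4 hx hx1 (hR.isAlt c d) (hinv c d)) a b
  rw [hrep a b, hR.pair_symm a b, hR.pair_symm a b, hrep x (S (S x)) a b, hrep x (S x) a b,
    hR.pair_symm x (S (S x)) x (S x)]
  ring

lemma apply_self_apply_self [FiniteDimensional ℝ V] (hV : finrank ℝ V = 4)
    (hsymm : ∀ a b, g a b = g b a) (hiso : ∀ a b, g (S a) (S b) = g a b)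
    (hS4 : ∀ v, S (S (S (S v))) = -v) {x : V} (hx : g x x = 1) (hx1 : g x (S x) = 0)
    (hR : IsAlgCurvatureTensor R) (hinv : ∀ a b c d, R a b (S c) (S d) = R a b c d) (w : V) :
    R w (S w) w (S w) = R x (S x) x (S x) * (g w w ^ 2 + 2 * g w (S w) ^ 2)
      + 2 * R x (S x) x (S (S x)) * g w (S w) * g w w := by
  rw [apply_eq_sqForm_skewForm hV hsymm hiso hS4 hx hx1 hR hinv,
    hR.apply_sq_apply_sq_eq_two_mul hinv hS4]
  simp only [sqForm_apply, skewForm_apply, hiso, apply_sq_self_eq_zero hsymm hiso hS4,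
    hsymm (S w) w]
  ring

end IsAlgCurvatureTensor

end

theorem sectional_curvature_relation_strong_invariance_general
    (g : (Fin 4 → ℝ) →ₗ[ℝ] (Fin 4 → ℝ) →ₗ[ℝ] ℝ)
    (hsymm : ∀ x y, g x y = g y x)
    (S : (Fin 4 → ℝ) →ₗ[ℝ] (Fin 4 → ℝ))
    (hS4 : ∀ x, S (S (S (S x))) = -x)
    (hiso : ∀ x y, g (S x) (S y) = g x y)
    (R : (Fin 4 → ℝ) →ₗ[ℝ] (Fin 4 → ℝ) →ₗ[ℝ] (Fin 4 → ℝ) →ₗ[ℝ] (Fin 4 → ℝ) →ₗ[ℝ] ℝ)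
    (hanti1 : ∀ a b c d, R a b c d = -R b a c d)
    (hanti2 : ∀ a b c d, R a b c d = -R a b d c)
    (hpair : ∀ a b c d, R a b c d = R c d a b)
    (hbianchi : ∀ a b c d, R a b c d + R b c a d + R c a b d = 0)
    (hinv : ∀ a b c d, R a b (S c) (S d) = R a b c d)
    (k : (Fin 4 → ℝ) → (Fin 4 → ℝ) → ℝ)
    (hk : ∀ a b, k a b = R a b a b / (g a a * g b b - (g a b) ^ 2))
    -- {S³x, S²x, Sx, x} is an orthonormal basis
    (x : Fin 4 → ℝ)
    (hxu : g x x = 1)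
    (ho1 : g x (S x) = 0)
    -- u is a unit vector with cos φ = g(u, Su) for φ = ∠(u, Su)
    (u : Fin 4 → ℝ) (hu : g u u = 1) (c : ℝ) (hc : c = g u (S u))
    -- v is a unit vector with ∠(v, Sv) = π/3
    (v : Fin 4 → ℝ) (hv : g v v = 1) (hvangle : g v (S v) = Real.cos (Real.pi / 3)) :
    k u (S u) = (1 + 2 * c ^ 2 - 3 * c) / (1 - c ^ 2) * k x (S x)
        + (3 * c) / (2 * (1 - c ^ 2)) * k v (S v) ∧
    k x (S (S x)) = 2 * (1 - (g x (S x)) ^ 2) * k x (S x) := by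
  have hR : IsAlgCurvatureTensor R := ⟨hanti1, hanti2, hpair, hbianchi⟩
  have hV : finrank ℝ (Fin 4 → ℝ) = 4 := by simp
  have hsec := hR.apply_self_apply_self hV hsymm hiso hS4 hxu ho1 hinv
  have hx2 : g x (S (S x)) = 0 := by rw [hsymm, apply_sq_self_eq_zero hsymm hiso hS4]
  rw [Real.cos_pi_div_three] at hvangle
  refine ⟨?_, ?_⟩
  · rw [hk, hk, hk, hiso, hiso, hiso, hsec u, hsec v, hxu, hu, hv, ho1, hvangle, ← hc, one_mul]
    -- `1 - c²` may vanish (then both sides are `0`), so it is kept as an atom instead of cleared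
    generalize 1 - c ^ 2 = d
    ring
  · rw [hk, hk, hxu, hiso, hiso, hxu, ho1, hx2, hR.apply_sq_apply_sq_eq_two_mul hinv hS4]
    ring

theorem sectional_curvature_relation_strong_invariance
    (g : (Fin 4 → ℝ) →ₗ[ℝ] (Fin 4 → ℝ) →ₗ[ℝ] ℝ)
    (hsymm : ∀ x y, g x y = g y x)
    (hpos : ∀ x, x ≠ 0 → 0 < g x x)
    (S : (Fin 4 → ℝ) →ₗ[ℝ] (Fin 4 → ℝ))
    (hS4 : ∀ x, S (S (S (S x))) = -x)
    (hiso : ∀ x y, g (S x) (S y) = g x y)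
    (R : (Fin 4 → ℝ) →ₗ[ℝ] (Fin 4 → ℝ) →ₗ[ℝ] (Fin 4 → ℝ) →ₗ[ℝ] (Fin 4 → ℝ) →ₗ[ℝ] ℝ)
    (hanti1 : ∀ a b c d, R a b c d = -R b a c d)
    (hanti2 : ∀ a b c d, R a b c d = -R a b d c)
    (hpair : ∀ a b c d, R a b c d = R c d a b)
    (hbianchi : ∀ a b c d, R a b c d + R b c a d + R c a b d = 0)
    (hinv : ∀ a b c d, R a b (S c) (S d) = R a b c d)
    (k : (Fin 4 → ℝ) → (Fin 4 → ℝ) → ℝ)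
    (hk : ∀ a b, k a b = R a b a b / (g a a * g b b - (g a b) ^ 2))
    -- {S³x, S²x, Sx, x} is an orthonormal basis
    (x : Fin 4 → ℝ)
    (hxu : g x x = 1) (hxu1 : g (S x) (S x) = 1)
    (hxu2 : g (S (S x)) (S (S x)) = 1) (hxu3 : g (S (S (S x))) (S (S (S x))) = 1)
    (ho1 : g x (S x) = 0) (ho2 : g x (S (S x)) = 0) (ho3 : g x (S (S (S x))) = 0)
    (ho4 : g (S x) (S (S x)) = 0) (ho5 : g (S x) (S (S (S x))) = 0)
    (ho6 : g (S (S x)) (S (S (S x))) = 0)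
    -- u is a unit vector with cos φ = g(u, Su) for φ = ∠(u, Su)
    (u : Fin 4 → ℝ) (hu : g u u = 1) (c : ℝ) (hc : c = g u (S u))
    -- v is a unit vector with ∠(v, Sv) = π/3
    (v : Fin 4 → ℝ) (hv : g v v = 1) (hvangle : g v (S v) = Real.cos (Real.pi / 3)) :
    k u (S u) = (1 + 2 * c ^ 2 - 3 * c) / (1 - c ^ 2) * k x (S x)
        + (3 * c) / (2 * (1 - c ^ 2)) * k v (S v) ∧
    k x (S (S x)) = 2 * (1 - (g x (S x)) ^ 2) * k x (S x) :=
  sectional_curvature_relation_strong_invariance_general g hsymm S hS4 hiso R hanti1 hanti2 hpair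
    hbianchi hinv k hk x hxu ho1 u hu c hc v hv hvangle
end
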